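/- Let Σ, Σ̂ ∈ ℝ^{d×d} be symmetric invertible matrices and let x, μ, μ̂ ∈ ℝ^d. Then the plug-in vector-based Mahalanobis squared distance satisfies the deterministic perturbation bound |(x − μ̂)ᵀ Σ̂⁻¹ (x − μ̂) − (x − μ)ᵀ Σ⁻¹ (x − μ)| ≤ ‖Σ⁻¹‖ ‖Σ̂⁻¹‖ ‖Σ̂ − Σ‖ ‖x − μ‖² + 2 ‖Σ̂⁻¹‖ ‖x − μ‖ ‖μ̂ − μ‖ + ‖Σ̂⁻¹‖ ‖μ̂ − μ‖², where ‖·‖ on matrices denotes the ℓ²-operator norm and ‖·‖ on vectors the Euclidean norm. -/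

import Mathlib

/-!
Put `u = x - μ` and `e = μ̂ - μ`, so that `x - μ̂ = u - e`, and split the difference as
`[Q̂(u - e) - Q̂(u)] + [Q̂(u) - Q(u)]`, where `Q` and `Q̂` are the quadratic forms of `Σ⁻¹` and `Σ̂⁻¹`.
The first bracket is `eᵀΣ̂⁻¹e - uᵀΣ̂⁻¹e - eᵀΣ̂⁻¹u`. By the resolvent identity
`Σ⁻¹ - Σ̂⁻¹ = Σ⁻¹ (Σ̂ - Σ) Σ̂⁻¹` the second is `-uᵀ Σ⁻¹ (Σ̂ - Σ) Σ̂⁻¹ u`. Cauchy–Schwarz and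
submultiplicativity of the operator norm bound every term.
-/

open Matrix

/-- The ℓ²-operator norm of a real matrix, i.e. the operator norm of the associated
linear map between Euclidean spaces. -/
noncomputable def opNorm {m n : ℕ} (A : Matrix (Fin m) (Fin n) ℝ) : ℝ :=
  ‖LinearMap.toContinuousLinearMap (Matrix.toEuclideanLin A)‖

/-- The Euclidean norm of a vector in `ℝ^d`. -/
noncomputable def eNorm {d : ℕ} (x : Fin d → ℝ) : ℝ :=
  Real.sqrt (x ⬝ᵥ x)

open WithLp (toLp)

lemma eNorm_eq_norm_toLp {n : ℕ} (x : Fin n → ℝ) : eNorm x = ‖toLp 2 x‖ := by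
  rw [EuclideanSpace.norm_eq, eNorm]
  simp [dotProduct, sq]

lemma eNorm_nonneg {n : ℕ} (x : Fin n → ℝ) : 0 ≤ eNorm x := Real.sqrt_nonneg _

lemma opNorm_nonneg {m n : ℕ} (A : Matrix (Fin m) (Fin n) ℝ) : 0 ≤ opNorm A := norm_nonneg _

lemma abs_dotProduct_le_eNorm_mul_eNorm {n : ℕ} (u v : Fin n → ℝ) :
    |u ⬝ᵥ v| ≤ eNorm u * eNorm v := by
  rw [eNorm_eq_norm_toLp, eNorm_eq_norm_toLp, dotProduct_comm]
  exact abs_real_inner_le_norm (toLp 2 u) (toLp 2 v)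

lemma eNorm_mulVec_le {m n : ℕ} (A : Matrix (Fin m) (Fin n) ℝ) (v : Fin n → ℝ) :
    eNorm (A *ᵥ v) ≤ opNorm A * eNorm v := by
  rw [eNorm_eq_norm_toLp, eNorm_eq_norm_toLp]
  exact (LinearMap.toContinuousLinearMap (toEuclideanLin A)).le_opNorm (toLp 2 v)

lemma opNorm_mul_le {l m n : ℕ} (A : Matrix (Fin l) (Fin m) ℝ) (B : Matrix (Fin m) (Fin n) ℝ) :
    opNorm (A * B) ≤ opNorm A * opNorm B := by
  have hcomp : LinearMap.toContinuousLinearMap (toEuclideanLin (A * B)) =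
      (LinearMap.toContinuousLinearMap (toEuclideanLin A)).comp
        (LinearMap.toContinuousLinearMap (toEuclideanLin B)) := by
    ext1 v
    simp
  rw [opNorm, hcomp]
  exact ContinuousLinearMap.opNorm_comp_le _ _

lemma abs_dotProduct_mulVec_le {m n : ℕ} (A : Matrix (Fin m) (Fin n) ℝ) (u : Fin m → ℝ)
    (v : Fin n → ℝ) : |u ⬝ᵥ A *ᵥ v| ≤ opNorm A * eNorm u * eNorm v :=
  calc |u ⬝ᵥ A *ᵥ v| ≤ eNorm u * eNorm (A *ᵥ v) := abs_dotProduct_le_eNorm_mul_eNorm _ _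
    _ ≤ eNorm u * (opNorm A * eNorm v) := by gcongr; exacts [eNorm_nonneg u, eNorm_mulVec_le A v]
    _ = opNorm A * eNorm u * eNorm v := by ring

lemma abs_dotProduct_mulVec_sub_sub_le {n : ℕ} (A : Matrix (Fin n) (Fin n) ℝ) (u e : Fin n → ℝ) :
    |(u - e) ⬝ᵥ A *ᵥ (u - e) - u ⬝ᵥ A *ᵥ u| ≤
      2 * opNorm A * eNorm u * eNorm e + opNorm A * eNorm e ^ 2 := by
  have hexpand : (u - e) ⬝ᵥ A *ᵥ (u - e) - u ⬝ᵥ A *ᵥ u =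
      e ⬝ᵥ A *ᵥ e - (u ⬝ᵥ A *ᵥ e + e ⬝ᵥ A *ᵥ u) := by
    simp only [mulVec_sub, sub_dotProduct, dotProduct_sub]
    ring
  have hue := abs_dotProduct_mulVec_le A u e
  have heu := abs_dotProduct_mulVec_le A e u
  have hee := abs_dotProduct_mulVec_le A e e
  rw [hexpand]
  calc _ ≤ |e ⬝ᵥ A *ᵥ e| + (|u ⬝ᵥ A *ᵥ e| + |e ⬝ᵥ A *ᵥ u|) :=
        (abs_sub _ _).trans (add_le_add_right (abs_add_le _ _) _)
    _ ≤ _ := by linarith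

lemma abs_dotProduct_inv_mulVec_sub_le {n : ℕ} (A B : Matrix (Fin n) (Fin n) ℝ)
    (hA : IsUnit A.det) (hB : IsUnit B.det) (u : Fin n → ℝ) :
    |u ⬝ᵥ B⁻¹ *ᵥ u - u ⬝ᵥ A⁻¹ *ᵥ u| ≤
      opNorm A⁻¹ * opNorm B⁻¹ * opNorm (B - A) * eNorm u ^ 2 := by
  have hinv : A⁻¹ - B⁻¹ = A⁻¹ * (B - A) * B⁻¹ :=
    inv_sub_inv (by rw [isUnit_iff_isUnit_det, isUnit_iff_isUnit_det]; exact iff_of_true hA hB)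
  calc |u ⬝ᵥ B⁻¹ *ᵥ u - u ⬝ᵥ A⁻¹ *ᵥ u| = |u ⬝ᵥ (A⁻¹ * (B - A) * B⁻¹) *ᵥ u| := by
        rw [← hinv, sub_mulVec, dotProduct_sub, abs_sub_comm]
    _ ≤ opNorm (A⁻¹ * (B - A) * B⁻¹) * eNorm u * eNorm u := abs_dotProduct_mulVec_le _ _ _
    _ ≤ opNorm A⁻¹ * opNorm (B - A) * opNorm B⁻¹ * eNorm u * eNorm u := by
        have := eNorm_nonneg u
        gcongr
        exact (opNorm_mul_le _ _).trans (by gcongr; exacts [opNorm_nonneg _, opNorm_mul_le _ _])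
    _ = opNorm A⁻¹ * opNorm B⁻¹ * opNorm (B - A) * eNorm u ^ 2 := by ring

theorem plugin_vector_msd_perturbation_bound_general {d : ℕ}
    (S Shat : Matrix (Fin d) (Fin d) ℝ)
    (hS : IsUnit S.det) (hShat : IsUnit Shat.det)
    (x μ μhat : Fin d → ℝ) :
    |(x - μhat) ⬝ᵥ Shat⁻¹ *ᵥ (x - μhat) - (x - μ) ⬝ᵥ S⁻¹ *ᵥ (x - μ)| ≤
      opNorm S⁻¹ * opNorm Shat⁻¹ * opNorm (Shat - S) * eNorm (x - μ) ^ 2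
        + 2 * opNorm Shat⁻¹ * eNorm (x - μ) * eNorm (μhat - μ)
        + opNorm Shat⁻¹ * eNorm (μhat - μ) ^ 2 := by
  have hcentre := abs_dotProduct_mulVec_sub_sub_le Shat⁻¹ (x - μ) (μhat - μ)
  have hcov := abs_dotProduct_inv_mulVec_sub_le S Shat hS hShat (x - μ)
  rw [sub_sub_sub_cancel_right] at hcentre
  have htriangle := abs_add_le
    ((x - μhat) ⬝ᵥ Shat⁻¹ *ᵥ (x - μhat) - (x - μ) ⬝ᵥ Shat⁻¹ *ᵥ (x - μ))
    ((x - μ) ⬝ᵥ Shat⁻¹ *ᵥ (x - μ) - (x - μ) ⬝ᵥ S⁻¹ *ᵥ (x - μ))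
  rw [sub_add_sub_cancel] at htriangle
  linarith

/-- Deterministic perturbation bound for the plug-in vector-based Mahalanobis squared
distance: for symmetric invertible `S, Ŝ ∈ ℝ^{d×d}` and `x, μ, μ̂ ∈ ℝ^d`,
`|(x − μ̂)ᵀ Ŝ⁻¹ (x − μ̂) − (x − μ)ᵀ S⁻¹ (x − μ)|
  ≤ ‖S⁻¹‖ ‖Ŝ⁻¹‖ ‖Ŝ − S‖ ‖x − μ‖² + 2 ‖Ŝ⁻¹‖ ‖x − μ‖ ‖μ̂ − μ‖ + ‖Ŝ⁻¹‖ ‖μ̂ − μ‖²`,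
with operator norms on matrices and Euclidean norms on vectors. -/
theorem plugin_vector_msd_perturbation_bound {d : ℕ}
    (S Shat : Matrix (Fin d) (Fin d) ℝ)
    (hS_symm : Sᵀ = S) (hShat_symm : Shatᵀ = Shat)
    (hS : IsUnit S.det) (hShat : IsUnit Shat.det)
    (x μ μhat : Fin d → ℝ) :
    |(x - μhat) ⬝ᵥ Shat⁻¹ *ᵥ (x - μhat) - (x - μ) ⬝ᵥ S⁻¹ *ᵥ (x - μ)| ≤
      opNorm S⁻¹ * opNorm Shat⁻¹ * opNorm (Shat - S) * eNorm (x - μ) ^ 2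
        + 2 * opNorm Shat⁻¹ * eNorm (x - μ) * eNorm (μhat - μ)
        + opNorm Shat⁻¹ * eNorm (μhat - μ) ^ 2 :=
  plugin_vector_msd_perturbation_bound_general S Shat hS hShat x μ μhat
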